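/- Let C be a small category, and let Q be a cartesian square in C in which the map Q(0,1) → Q(0,0) is a monomorphism. Let K_Q be the pushout of h(Q(0,1)) ← h(Q(1,1)) → h(Q(1,0)) in presheaves of sets on C, and let k_Q : K_Q → h(Q(0,0)) be the canonical map. Then the pullback of k_Q along h(Q(0,1)) → h(Q(0,0)) is an isomorphism. -/

import Mathlib

open CategoryTheory CategoryTheory.Limits

universe u

/-- In presheaves of sets on a small category, for a cartesian square of representables
whose bottom map is a monomorphism, the canonical map `k_Q` from the pushout `K_Q` of the
span `h(Q(0,1)) ← h(Q(1,1)) → h(Q(1,0))` to `h(Q(0,0))` becomes an isomorphism after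
pullback along `h(Q(0,1)) → h(Q(0,0))`. -/
theorem stmt_13 {C : Type u} [SmallCategory C]
    {Q11 Q10 Q01 Q00 : C} (t : Q11 ⟶ Q10) (l : Q11 ⟶ Q01) (r : Q10 ⟶ Q00) (m : Q01 ⟶ Q00)
    [Mono m] (hQ : IsPullback t l r m) :
    IsIso (pullback.snd
      (pushout.desc (yoneda.map r) (yoneda.map m)
        (by rw [← yoneda.map_comp, ← yoneda.map_comp, hQ.w]) :
        pushout (yoneda.map t) (yoneda.map l) ⟶ yoneda.obj Q00)
      (yoneda.map m)) := by
  set k : pushout (yoneda.map t) (yoneda.map l) ⟶ yoneda.obj Q00 :=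
    pushout.desc (yoneda.map r) (yoneda.map m)
      (by rw [← yoneda.map_comp, ← yoneda.map_comp, hQ.w]) with hk
  -- core elementwise lemma
  have core : ∀ (X : Cᵒᵖ) (z : (pushout (yoneda.map t) (yoneda.map l)).obj X)
      (a : Opposite.unop X ⟶ Q01), k.app X z = a ≫ m →
      (pushout.inr (yoneda.map t) (yoneda.map l)).app X a = z := by
    intro X z a hz
    have hinl : ∀ b : Opposite.unop X ⟶ Q10,
        (pushout.inl (yoneda.map t) (yoneda.map l)).app X b = z →
        (pushout.inr (yoneda.map t) (yoneda.map l)).app X a = z := by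
      intro b hb
      have hcomm : b ≫ r = a ≫ m := by
        rw [← hz, ← hb]
        exact (ConcreteCategory.congr_hom (NatTrans.congr_app
          (pushout.inl_desc (yoneda.map r) (yoneda.map m)
            (by rw [← yoneda.map_comp, ← yoneda.map_comp, hQ.w])) X) b).symm
      have h1 : hQ.lift b a hcomm ≫ t = b := hQ.lift_fst b a hcomm
      have h2 : hQ.lift b a hcomm ≫ l = a := hQ.lift_snd b a hcomm
      have hcond := ConcreteCategory.congr_hom (NatTrans.congr_app
        (pushout.condition (f := yoneda.map t) (g := yoneda.map l)) X) (hQ.lift b a hcomm)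
      simp only [FunctorToTypes.comp, yoneda_map_app] at hcond
      change (pushout.inl (yoneda.map t) (yoneda.map l)).app X (hQ.lift b a hcomm ≫ t) = (pushout.inr (yoneda.map t) (yoneda.map l)).app X (hQ.lift b a hcomm ≫ l) at hcond
      rw [← h2, ← hcond, h1, hb]
    obtain ⟨j, y, hy⟩ := Types.jointly_surjective _
      (isColimitOfPreserves ((evaluation Cᵒᵖ (Type u)).obj X)
        (colimit.isColimit (span (yoneda.map t) (yoneda.map l)))) z
    simp only [Functor.mapCocone_ι_app, evaluation_obj_map] at hy
    rcases j with _ | j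
    · -- none
      have hw := colimit.w (span (yoneda.map t) (yoneda.map l)) WalkingSpan.Hom.fst
      have := ConcreteCategory.congr_hom (NatTrans.congr_app hw X) y
      simp only [FunctorToTypes.comp, span_map_fst, yoneda_map_app] at this
      exact hinl (y ≫ t) (this.trans hy)
    · cases j with
      | left => exact hinl y hy
      | right =>
        have hcomm : y ≫ m = a ≫ m := by
          rw [← hz, ← hy]
          exact (ConcreteCategory.congr_hom (NatTrans.congr_app
            (pushout.inr_desc (yoneda.map r) (yoneda.map m)
              (by rw [← yoneda.map_comp, ← yoneda.map_comp, hQ.w])) X) y).symm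
        have hya : y = a := (cancel_mono m).mp hcomm
        rw [hya] at hy
        exact hy
  -- key equality of maps out of the pullback
  have hL : pullback.snd k (yoneda.map m) ≫ pushout.inr (yoneda.map t) (yoneda.map l)
      = pullback.fst k (yoneda.map m) := by
    apply NatTrans.ext
    funext X
    ext x
    apply core
    have := ConcreteCategory.congr_hom (NatTrans.congr_app (pullback.condition (f := k) (g := yoneda.map m)) X) x
    simp at this
    exact this
  have hik : pushout.inr (yoneda.map t) (yoneda.map l) ≫ k = yoneda.map m :=
    pushout.inr_desc _ _ _
  refine ⟨⟨pullback.lift (pushout.inr (yoneda.map t) (yoneda.map l)) (𝟙 _) (by simpa using hik),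
    ?_, ?_⟩⟩
  · apply pullback.hom_ext
    · rw [Category.assoc]
      erw [pullback.lift_fst]
      exact hL.trans (Category.id_comp _).symm
    · rw [Category.assoc]
      erw [pullback.lift_snd]
      exact (Category.comp_id _).trans (Category.id_comp _).symm
  · exact pullback.lift_snd _ _ _
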